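/- arXiv:1211.4816 — 4 statements merged into one kernel-verified Lean document; each statement's English description precedes it below -/
import Mathlib

section
/- Let h : ℕ → ℝ and Δ : ℕ → ℝ with Δ nondecreasing on positive integers and Σ_{r≥1} Δ(r)/(r(r+1)) < ∞. Suppose that h(n+m) ≤ h(n) + h(m) + Δ(n+m) for all integers n, m ≥ 1. Then the sequence (h(n)/n)_{n≥1} converges to a limit in [−∞, +∞); that is, there exists L ∈ ℝ ∪ {−∞} (an extended real with L < +∞) such that h(n)/n → L as n → ∞. -/
/-!
Shift `Δ` by a constant so that it is nonnegative, and let `T k = ∑_{j ≥ k} Δ j / (j (j + 1))`.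
Monotonicity of `Δ` gives `Δ a * (1 / a - 1 / (a + b)) ≤ T a - T (a + b)`, so for a balanced
splitting `b ≤ a ≤ 2 b` the error `Δ a + Δ b` is absorbed by `6 a (T a - T (a + b))`. Hence
`g n = h n - Δ n + 6 n T n` is subadditive along balanced splittings, and that is enough for
Fekete's argument: writing `n ≥ 2 k` as a multiple of `k` plus a smaller number `≥ k` gives
`limsup g n / n ≤ g k / k` for every `k`. Finally `Δ n / n ≤ 2 T n → 0`, so `h n / n` has the
same limit as `g n / n`.
-/

open Filter Finset Topology

lemma EReal.tendsto_coe_add_of_tendsto_zero {α : Type*} {l : Filter α} {u v : α → ℝ} {L : EReal}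
    (hu : Tendsto (fun x => (u x : EReal)) l (𝓝 L)) (hv : Tendsto v l (𝓝 0)) :
    Tendsto (fun x => ((u x + v x : ℝ) : EReal)) l (𝓝 L) := by
  have hv' : Tendsto (fun x => (v x : EReal)) l (𝓝 0) :=
    (continuous_coe_real_ereal.tendsto 0).comp hv
  have hadd := EReal.continuousAt_add (p := (L, 0)) (Or.inr (by simp)) (Or.inr (by simp))
  simpa [Function.comp_def] using hadd.tendsto.comp (hu.prodMk_nhds hv')

lemma EReal.exists_tendsto_of_limsup_le {u : ℕ → ℝ}
    (h : ∀ᶠ k in atTop, limsup (fun n => (u n : EReal)) atTop ≤ u k) :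
    ∃ L < ⊤, Tendsto (fun n => (u n : EReal)) atTop (𝓝 L) := by
  obtain ⟨k, hk⟩ := h.exists
  have hle : limsup (fun n => (u n : EReal)) atTop ≤ liminf (fun n => (u n : EReal)) atTop :=
    le_liminf_of_le (by isBoundedDefault) h
  exact ⟨_, hk.trans_lt (EReal.coe_lt_top _),
    tendsto_of_liminf_eq_limsup (le_antisymm liminf_le_limsup hle) rfl⟩

def BalancedSubadditive (g : ℕ → ℝ) : Prop :=
  ∀ a b, 1 ≤ a → 1 ≤ b → a ≤ 2 * b → b ≤ 2 * a → g (a + b) ≤ g a + g b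

namespace BalancedSubadditive

variable {g : ℕ → ℝ}

lemma le_nat_mul (hg : BalancedSubadditive g) {k : ℕ} (hk : 1 ≤ k) {q : ℕ} (hq : 1 ≤ q) :
    g (q * k) ≤ q * g k := by
  induction q using Nat.strong_induction_on with
  | _ q ih =>
  rcases eq_or_lt_of_le hq with rfl | hq
  · simp
  obtain ⟨q₁, q₂, rfl, hq₁, hq₂, h₁₂, h₂₁⟩ :
      ∃ q₁ q₂, q = q₁ + q₂ ∧ 1 ≤ q₁ ∧ 1 ≤ q₂ ∧ q₁ ≤ 2 * q₂ ∧ q₂ ≤ 2 * q₁ :=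
    ⟨(q + 1) / 2, q / 2, by omega, by omega, by omega, by omega, by omega⟩
  have hsplit := hg (q₁ * k) (q₂ * k) (by nlinarith) (by nlinarith) (by nlinarith) (by nlinarith)
  rw [← add_mul] at hsplit
  push_cast
  linarith [ih q₁ (by omega) hq₁, ih q₂ (by omega) hq₂]

lemma le_mul_div_add (hg : BalancedSubadditive g) {k : ℕ} (hk : 1 ≤ k) {R : ℝ}
    (hR : ∀ n, k ≤ n → n < 2 * k → g n ≤ n * (g k / k) + R) {n : ℕ} (hn : k ≤ n) :
    g n ≤ n * (g k / k) + R := by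
  induction n using Nat.strong_induction_on with
  | _ n ih =>
  by_cases hn₂ : n < 2 * k
  · exact hR n hn hn₂
  set q := n / k
  have hqk_le : q * k ≤ n := Nat.div_mul_le_self n k
  have hlt_qk : n < q * k + k := Nat.lt_div_mul_add hk
  have hq : 2 ≤ q := (Nat.le_div_iff_mul_le hk).2 (by omega)
  obtain ⟨q₁, q₂, hq₁₂, hq₁, hq₂, h₁₂, h₂₁⟩ :
      ∃ q₁ q₂, q = q₁ + q₂ ∧ 1 ≤ q₁ ∧ 1 ≤ q₂ ∧ q₁ ≤ 2 * q₂ ∧ q₂ + 1 ≤ 2 * q₁ :=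
    ⟨(q + 1) / 2, q / 2, by omega, by omega, by omega, by omega, by omega⟩
  have hsum : q₁ * k + q₂ * k = q * k := by rw [hq₁₂, add_mul]
  have hA : q₁ * k ≤ 2 * (q₂ * k) := by nlinarith
  have hB : q₂ * k + k ≤ 2 * (q₁ * k) := by nlinarith
  have hk₂ : k ≤ q₂ * k := by nlinarith
  -- `a` is a multiple of `k`, so only the induction hypothesis for `b` brings in `R`.
  set a := q₁ * k
  set b := n - a
  have hab : n = a + b := by omega
  have hsplit := hg a b (by omega) (by omega) (by omega) (by omega)
  have hgb := ih b (by omega) (by omega)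
  have hga : g a ≤ a * (g k / k) := by
    have hk₀ : (k : ℝ) ≠ 0 := by positivity
    calc g a ≤ q₁ * g k := hg.le_nat_mul hk hq₁
      _ = a * (g k / k) := by simp only [a]; push_cast; field_simp
  rw [hab]
  push_cast
  linarith

lemma exists_le_mul_div_add (hg : BalancedSubadditive g) {k : ℕ} (hk : 1 ≤ k) :
    ∃ R, ∀ n, k ≤ n → g n ≤ n * (g k / k) + R := by
  obtain ⟨R, hR⟩ := ((Set.finite_Ico k (2 * k)).image fun n => g n - n * (g k / k)).bddAbove
  exact ⟨R, fun n hn => hg.le_mul_div_add hk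
    (fun m hkm hm => by linarith [hR ⟨m, ⟨hkm, hm⟩, rfl⟩]) hn⟩

lemma limsup_le (hg : BalancedSubadditive g) {k : ℕ} (hk : 1 ≤ k) :
    limsup (fun n : ℕ => ((g n / n : ℝ) : EReal)) atTop ≤ ((g k / k : ℝ) : EReal) := by
  obtain ⟨R, hR⟩ := hg.exists_le_mul_div_add hk
  have hlim : Tendsto (fun n : ℕ => ((g k / k + R / n : ℝ) : EReal)) atTop
      (𝓝 ((g k / k : ℝ) : EReal)) :=
    (continuous_coe_real_ereal.tendsto _).comp
      (by simpa using tendsto_const_nhds.add (tendsto_const_div_atTop_nhds_zero_nat R))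
  refine (limsup_le_limsup ?_).trans_eq hlim.limsup_eq
  filter_upwards [eventually_ge_atTop k] with n hn
  have hn₀ : (0 : ℝ) < n := by exact_mod_cast hk.trans hn
  rw [EReal.coe_le_coe_iff, div_le_iff₀ hn₀, add_mul, div_mul_cancel₀ _ hn₀.ne']
  linarith [hR n hn]

lemma exists_tendsto_div (hg : BalancedSubadditive g) :
    ∃ L < ⊤, Tendsto (fun n : ℕ => ((g n / n : ℝ) : EReal)) atTop (𝓝 L) :=
  EReal.exists_tendsto_of_limsup_le ((eventually_ge_atTop 1).mono fun _ hk => hg.limsup_le hk)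

end BalancedSubadditive

namespace Hammersley

noncomputable def tail (d : ℕ → ℝ) (n : ℕ) : ℝ := ∑' r, d (r + n)

section Tail

variable {d : ℕ → ℝ}

lemma tail_eq_tsum_sub (hd : Summable d) (n : ℕ) : tail d n = ∑' r, d r - ∑ i ∈ range n, d i :=
  eq_sub_of_add_eq' (hd.sum_add_tsum_nat_add n)

lemma tail_sub_tail (hd : Summable d) {a b : ℕ} (hab : a ≤ b) :
    tail d a - tail d b = ∑ i ∈ Ico a b, d i := by
  rw [tail_eq_tsum_sub hd, tail_eq_tsum_sub hd, sum_Ico_eq_sub _ hab]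
  ring

lemma tail_nonneg (hd0 : ∀ j, 0 ≤ d j) (n : ℕ) : 0 ≤ tail d n :=
  tsum_nonneg fun _ => hd0 _

lemma tail_antitone (hd : Summable d) (hd0 : ∀ j, 0 ≤ d j) : Antitone (tail d) := fun _ _ hab =>
  sub_nonneg.1 <| (tail_sub_tail hd hab).symm ▸ sum_nonneg fun i _ => hd0 i

variable (d) in
lemma tendsto_tail : Tendsto (tail d) atTop (𝓝 0) :=
  tendsto_sum_nat_add d

end Tail

noncomputable def term (D : ℕ → ℝ) (j : ℕ) : ℝ := D j / (j * (j + 1))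

section Term

variable {D : ℕ → ℝ}

lemma term_nonneg (hD0 : ∀ n, 1 ≤ n → 0 ≤ D n) (j : ℕ) : 0 ≤ term D j := by
  rcases Nat.eq_zero_or_pos j with rfl | hj
  · simp [term]
  · exact div_nonneg (hD0 j hj) (by positivity)

lemma summable_term_one : Summable (term fun _ => 1) := by
  refine (Real.summable_nat_pow_inv.2 one_lt_two).of_nonneg_of_le
    (term_nonneg fun _ _ => zero_le_one) fun j => ?_
  rcases Nat.eq_zero_or_pos j with rfl | hj
  · simp [term]
  · rw [term, one_div, sq]
    gcongr
    linarith

lemma summable_term_add_const (hD : Summable (term D)) (c : ℝ) :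
    Summable (term fun n => D n + c) :=
  (hD.add (summable_term_one.mul_left c)).congr fun j => by
    simp only [term]
    ring

lemma mul_inv_sub_inv_le_tail_sub (hDmono : ∀ m n, 1 ≤ m → m ≤ n → D m ≤ D n)
    (hD : Summable (term D)) {M N : ℕ} (hM : 1 ≤ M) (hMN : M ≤ N) :
    D M * ((M : ℝ)⁻¹ - (N : ℝ)⁻¹) ≤ tail (term D) M - tail (term D) N := by
  rw [tail_sub_tail hD hMN, ← neg_sub_neg, ← sum_Ico_sub (fun i : ℕ => -(i : ℝ)⁻¹) hMN, mul_sum]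
  refine sum_le_sum fun j hj => ?_
  have hMj : M ≤ j := (mem_Ico.1 hj).1
  have hj0 : (0 : ℝ) < j := by exact_mod_cast hM.trans hMj
  have htelescope : -((j + 1 : ℕ) : ℝ)⁻¹ - -(j : ℝ)⁻¹ = (j * (j + 1) : ℝ)⁻¹ := by
    push_cast
    field_simp
    ring
  rw [htelescope, term, div_eq_mul_inv]
  exact mul_le_mul_of_nonneg_right (hDmono M j hM hMj) (by positivity)

lemma add_le_six_mul_tail_sub (hD0 : ∀ n, 1 ≤ n → 0 ≤ D n)
    (hDmono : ∀ m n, 1 ≤ m → m ≤ n → D m ≤ D n) (hD : Summable (term D))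
    {a b : ℕ} (hb : 1 ≤ b) (hba : b ≤ a) (hab : a ≤ 2 * b) :
    D a + D b ≤ 6 * a * (tail (term D) a - tail (term D) (a + b)) := by
  have ha : 1 ≤ a := hb.trans hba
  have hA : (0 : ℝ) < a := by exact_mod_cast ha
  have hB : (0 : ℝ) < b := by exact_mod_cast hb
  have hAB : (a : ℝ) ≤ 2 * b := by exact_mod_cast hab
  have hinv : (3 * (a : ℝ))⁻¹ ≤ (a : ℝ)⁻¹ - ((a + b : ℕ) : ℝ)⁻¹ := by
    push_cast
    rw [inv_sub_inv hA.ne' (by positivity), add_sub_cancel_left, inv_eq_one_div,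
      div_le_div_iff₀ (by positivity) (by positivity)]
    nlinarith
  have hDa : D a ≤ 3 * a * (tail (term D) a - tail (term D) (a + b)) :=
    calc D a = 3 * a * (D a * (3 * (a : ℝ))⁻¹) := by field_simp
      _ ≤ 3 * a * (D a * ((a : ℝ)⁻¹ - ((a + b : ℕ) : ℝ)⁻¹)) := by gcongr; exact hD0 a ha
      _ ≤ 3 * a * (tail (term D) a - tail (term D) (a + b)) := by
        gcongr
        exact mul_inv_sub_inv_le_tail_sub hDmono hD ha (Nat.le_add_right a b)
  linarith [hDmono b a hb hba]

lemma le_two_mul_tail (hD0 : ∀ n, 1 ≤ n → 0 ≤ D n)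
    (hDmono : ∀ m n, 1 ≤ m → m ≤ n → D m ≤ D n) (hD : Summable (term D)) {n : ℕ} (hn : 1 ≤ n) :
    D n ≤ 2 * n * tail (term D) n := by
  have hN : (0 : ℝ) < n := by exact_mod_cast hn
  have h := mul_inv_sub_inv_le_tail_sub hDmono hD hn (Nat.le_mul_of_pos_left n two_pos)
  have hinv : (n : ℝ)⁻¹ - ((2 * n : ℕ) : ℝ)⁻¹ = (2 * n : ℝ)⁻¹ := by
    push_cast
    field_simp
    norm_num
  rw [hinv] at h
  have := tail_nonneg (term_nonneg hD0) (2 * n)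
  calc D n = 2 * n * (D n * (2 * n : ℝ)⁻¹) := by field_simp
    _ ≤ 2 * n * tail (term D) n := by gcongr; linarith

lemma tendsto_div_natCast_zero (hD0 : ∀ n, 1 ≤ n → 0 ≤ D n)
    (hDmono : ∀ m n, 1 ≤ m → m ≤ n → D m ≤ D n) (hD : Summable (term D)) :
    Tendsto (fun n : ℕ => D n / n) atTop (𝓝 0) := by
  have hT : Tendsto (fun n => 2 * tail (term D) n) atTop (𝓝 0) := by
    simpa using (tendsto_tail (term D)).const_mul 2
  refine tendsto_of_tendsto_of_tendsto_of_le_of_le' tendsto_const_nhds hT ?_ ?_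
  all_goals filter_upwards [eventually_ge_atTop 1] with n hn
  · exact div_nonneg (hD0 n hn) n.cast_nonneg
  · rw [div_le_iff₀ (by exact_mod_cast hn)]
    linarith [le_two_mul_tail hD0 hDmono hD hn]

end Term

lemma balancedSubadditive_sub_add_mul_tail {h D : ℕ → ℝ} (hD0 : ∀ n, 1 ≤ n → 0 ≤ D n)
    (hDmono : ∀ m n, 1 ≤ m → m ≤ n → D m ≤ D n) (hD : Summable (term D))
    (hsub : ∀ m n, 1 ≤ m → 1 ≤ n → h (m + n) ≤ h m + h n + D (m + n)) :
    BalancedSubadditive fun n => h n - D n + 6 * n * tail (term D) n := by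
  intro a b ha hb hab hba
  wlog hle : b ≤ a generalizing a b
  · simpa only [add_comm a b, add_comm (h b - D b + _)] using this b a hb ha hba hab (by omega)
  have hT : tail (term D) (a + b) ≤ tail (term D) b :=
    tail_antitone hD (term_nonneg hD0) (Nat.le_add_left b a)
  push_cast
  linarith [hsub a b ha hb, add_le_six_mul_tail_sub hD0 hDmono hD hb hle hab,
    mul_nonneg (b.cast_nonneg : (0 : ℝ) ≤ b) (sub_nonneg.2 hT)]

theorem exists_tendsto_div {h D : ℕ → ℝ} (hD0 : ∀ n, 1 ≤ n → 0 ≤ D n)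
    (hDmono : ∀ m n, 1 ≤ m → m ≤ n → D m ≤ D n) (hD : Summable (term D))
    (hsub : ∀ m n, 1 ≤ m → 1 ≤ n → h (m + n) ≤ h m + h n + D (m + n)) :
    ∃ L < ⊤, Tendsto (fun n : ℕ => ((h n / n : ℝ) : EReal)) atTop (𝓝 L) := by
  obtain ⟨L, hL, hg⟩ := (balancedSubadditive_sub_add_mul_tail hD0 hDmono hD hsub).exists_tendsto_div
  have hv : Tendsto (fun n : ℕ => D n / n - 6 * tail (term D) n) atTop (𝓝 0) := by
    simpa using (tendsto_div_natCast_zero hD0 hDmono hD).sub ((tendsto_tail _).const_mul 6)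
  refine ⟨L, hL, (EReal.tendsto_coe_add_of_tendsto_zero hg hv).congr' ?_⟩
  filter_upwards [eventually_ge_atTop 1] with n hn
  have hn₀ : (n : ℝ) ≠ 0 := by positivity
  congr 1
  field_simp
  ring

end Hammersley

/-- Hammersley's approximate subadditive lemma: if `h(n+m) ≤ h(n) + h(m) + Δ(n+m)` with `Δ`
nondecreasing on positive integers and `Σ_{r≥1} Δ(r)/(r(r+1)) < ∞`, then `h(n)/n` converges
to a limit in `[−∞,+∞)`. -/
theorem hammersley_approximate_subadditive (h Δ : ℕ → ℝ)
    (hΔmono : ∀ m n : ℕ, 1 ≤ m → m ≤ n → Δ m ≤ Δ n)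
    (hΔsum : Summable fun r : ℕ => Δ (r + 1) / (((r : ℝ) + 1) * ((r : ℝ) + 2)))
    (hsub : ∀ m n : ℕ, 1 ≤ m → 1 ≤ n → h (m + n) ≤ h m + h n + Δ (m + n)) :
    ∃ L : EReal, L < ⊤ ∧
      Tendsto (fun n : ℕ => ((h n / (n : ℝ) : ℝ) : EReal)) atTop (nhds L) := by
  have hΔ : Summable (Hammersley.term Δ) :=
    (summable_nat_add_iff 1).1 <| hΔsum.congr fun r => by
      simp only [Hammersley.term]
      push_cast
      ring
  refine Hammersley.exists_tendsto_div (D := fun n => Δ n + |Δ 1|) (fun n hn => ?_)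
    (fun m n hm hmn => ?_) (Hammersley.summable_term_add_const hΔ _) (fun m n hm hn => ?_)
  · linarith [hΔmono 1 n le_rfl hn, neg_abs_le (Δ 1)]
  · linarith [hΔmono m n hm hmn]
  · linarith [hsub m n hm hn, abs_nonneg (Δ 1)]
end

section
/- Suppose Σ_{n≥1} |ρ(n)| < ∞. Then for every β ≥ 0 and every h ∈ ℝ, the sequence ((1/n) log Z_n(β,h))_{n≥1} converges to a finite real limit F^a(β,h) (the annealed free energy exists and is finite). -/
/-!
Concatenating a composition of `m` with one of `n` gives a composition of `m + n` whose renewal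
set is `τ ∪ (m + σ)`, where `τ ⊆ {1, …, m}` and `σ ⊆ {1, …, n}` are the renewal sets of the two
pieces. Its weight is therefore the product of the two weights times `exp (β² Σ ρ (m + b - a))`,
summed over `a ∈ τ`, `b ∈ σ`, and this cross term is at least `-D(m,n)`, where, writing
`P(n) = Σ_{1 ≤ a < b ≤ n} |ρ (b - a)|`, one has `D(m,n) = P(m + n) - P(m) - P(n)`. Hence
`Z_m Z_n ≤ exp (β² D(m,n)) Z_{m+n}`, i.e. `-log Z_n - β² P(n)` is subadditive. Summability of `ρ`
gives `P(n) ≤ n Σ |ρ|`, so Fekete's lemma makes `P(n)/n` converge, and together with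
`Z_n ≤ 2ⁿ exp (n |h + β²/2| + β² P(n))` (from `K ≤ 1`) it applies to `-log Z_n - β² P(n)` too.
-/

open Real Filter Finset

noncomputable def annWeight (K ρ : ℕ → ℝ) (β h : ℝ) {m : ℕ} (c : Composition m) : ℝ :=
  Real.exp ((c.length : ℝ) * (h + β ^ 2 / 2)
      + β ^ 2 * ∑ i : Fin c.length, ∑ j : Fin c.length,
          if (i : ℕ) < (j : ℕ) then
            ρ (c.sizeUpTo ((j : ℕ) + 1) - c.sizeUpTo ((i : ℕ) + 1)) else 0)
    * ∏ i : Fin c.length, K (c.blocksFun i)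

/-- The annealed partition function `Z_n(β,h)`: the sum over `k ≥ 1` and tuples
`(l_1,…,l_k)` of positive integers with `l_1+⋯+l_k = n` (i.e. compositions of `n`) of
`exp(k(h+β²/2) + β² Σ_{1≤i<j≤k} ρ(τ_j − τ_i)) ∏ K(l_i)`, where `τ_i = l_1+⋯+l_i`. -/
noncomputable def Zann (K ρ : ℕ → ℝ) (β h : ℝ) (n : ℕ) : ℝ :=
  ∑ c : Composition n, annWeight K ρ β h c

theorem Subadditive.exists_tendsto_div {u : ℕ → ℝ} (hu : Subadditive u) {C : ℝ}
    (hC : ∀ n, 0 < n → C * n ≤ u n) : ∃ L, Tendsto (fun n => u n / n) atTop (nhds L) := by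
  refine ⟨hu.lim, hu.tendsto_lim ⟨min C 0, ?_⟩⟩
  rintro _ ⟨n, rfl⟩
  rcases n.eq_zero_or_pos with rfl | hn
  · simp
  · exact (min_le_left _ _).trans ((le_div_iff₀ (by exact_mod_cast hn)).2 (hC n hn))

section PairSum

variable (f : ℕ → ℝ)

def pairSum (A : Finset ℕ) : ℝ :=
  ∑ a ∈ A, ∑ b ∈ A, if a < b then f (b - a) else 0

def crossSum (A B : Finset ℕ) : ℝ :=
  ∑ a ∈ A, ∑ b ∈ B, f (b - a)

variable {f}

theorem pairSum_image {ι : Type*} [LinearOrder ι] {s : Finset ι} {g : ι → ℕ}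
    (hg : StrictMonoOn g s) :
    pairSum f (s.image g) = ∑ i ∈ s, ∑ j ∈ s, if i < j then f (g j - g i) else 0 := by
  rw [pairSum, sum_image hg.injOn]
  refine sum_congr rfl fun i hi => ?_
  rw [sum_image hg.injOn]
  exact sum_congr rfl fun j hj => by simp only [hg.lt_iff_lt hi hj]

theorem pairSum_map_addLeft (m : ℕ) (A : Finset ℕ) :
    pairSum f (A.map (addLeftEmbedding m)) = pairSum f A := by
  simp [pairSum, Nat.add_sub_add_left]

theorem pairSum_union {A B : Finset ℕ} (hAB : ∀ a ∈ A, ∀ b ∈ B, a < b) :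
    pairSum f (A ∪ B) = pairSum f A + pairSum f B + crossSum f A B := by
  have hdisj : Disjoint A B :=
    disjoint_left.2 fun a ha haB => lt_irrefl a (hAB a ha a haB)
  have hBA : ∀ b ∈ B, ∑ a ∈ A, (if b < a then f (a - b) else 0) = 0 := fun b hb =>
    sum_eq_zero fun a ha => if_neg (hAB a ha b hb).asymm
  have hAB' : ∀ a ∈ A, ∑ b ∈ B, (if a < b then f (b - a) else 0) = ∑ b ∈ B, f (b - a) :=
    fun a ha => sum_congr rfl fun b hb => if_pos (hAB a ha b hb)
  simp only [pairSum, crossSum, sum_union hdisj, sum_add_distrib, sum_congr rfl hBA,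
    sum_congr rfl hAB', sum_const_zero]
  ring

theorem pairSum_union_map_addLeft {m n : ℕ} {A B : Finset ℕ} (hA : A ⊆ Icc 1 m)
    (hB : B ⊆ Icc 1 n) :
    pairSum f (A ∪ B.map (addLeftEmbedding m))
      = pairSum f A + pairSum f B + crossSum f A (B.map (addLeftEmbedding m)) := by
  rw [pairSum_union, pairSum_map_addLeft]
  intro a ha b hb
  obtain ⟨b, hb', rfl⟩ := Finset.mem_map.1 hb
  have := mem_Icc.1 (hA ha)
  have := mem_Icc.1 (hB hb')
  simp only [addLeftEmbedding_apply]
  omega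

theorem abs_pairSum_le (A : Finset ℕ) : |pairSum f A| ≤ pairSum (fun d => |f d|) A :=
  (abs_sum_le_sum_abs _ _).trans <| sum_le_sum fun _ _ =>
    (abs_sum_le_sum_abs _ _).trans <| sum_le_sum fun _ _ => by split_ifs <;> simp

theorem abs_crossSum_le (A B : Finset ℕ) : |crossSum f A B| ≤ crossSum (fun d => |f d|) A B :=
  (abs_sum_le_sum_abs _ _).trans <| sum_le_sum fun _ _ => abs_sum_le_sum_abs _ _

theorem pairSum_mono (hf : ∀ d, 0 ≤ f d) : Monotone (pairSum f) := fun A A' hA =>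
  (sum_le_sum fun _ _ => sum_le_sum_of_subset_of_nonneg hA fun _ _ _ => by
      split_ifs <;> simp [hf]).trans <|
    sum_le_sum_of_subset_of_nonneg hA fun _ _ _ => sum_nonneg fun _ _ => by
      split_ifs <;> simp [hf]

theorem crossSum_mono (hf : ∀ d, 0 ≤ f d) {A A' B B' : Finset ℕ} (hA : A ⊆ A')
    (hB : B ⊆ B') :
    crossSum f A B ≤ crossSum f A' B' :=
  (sum_le_sum fun _ _ => sum_le_sum_of_subset_of_nonneg hB fun _ _ _ => hf _).trans <|
    sum_le_sum_of_subset_of_nonneg hA fun _ _ _ => sum_nonneg fun _ _ => hf _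

theorem pairSum_abs_le_card_mul_tsum (hf : Summable fun j => |f (j + 1)|) (A : Finset ℕ) :
    pairSum (fun d => |f d|) A ≤ A.card * ∑' j, |f (j + 1)| := by
  rw [← nsmul_eq_mul]
  refine sum_le_card_nsmul _ _ _ fun a _ => ?_
  calc ∑ b ∈ A, (if a < b then |f (b - a)| else 0)
      = ∑ b ∈ A with a < b, |f (b - a - 1 + 1)| := by
        rw [sum_filter]
        refine sum_congr rfl fun b _ => ?_
        split_ifs with hab
        · rw [Nat.sub_add_cancel (by omega)]
        · rfl
    _ = ∑ j ∈ (A.filter (a < ·)).image (fun b => b - a - 1), |f (j + 1)| := by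
        rw [sum_image fun b hb b' hb' h => ?_]
        simp only [mem_coe, mem_filter] at hb hb' h
        omega
    _ ≤ ∑' j, |f (j + 1)| := hf.sum_le_tsum _ fun _ _ => abs_nonneg _

variable (f) in
theorem pairSum_Icc_one_add (m n : ℕ) :
    pairSum f (Icc 1 (m + n)) = pairSum f (Icc 1 m) + pairSum f (Icc 1 n)
      + crossSum f (Icc 1 m) ((Icc 1 n).map (addLeftEmbedding m)) := by
  have hunion : Icc 1 (m + n) = Icc 1 m ∪ (Icc 1 n).map (addLeftEmbedding m) := by
    ext x
    simp only [mem_Icc, mem_union, Finset.mem_map, addLeftEmbedding_apply]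
    constructor
    · intro hx
      by_cases hxm : x ≤ m
      · exact Or.inl ⟨hx.1, hxm⟩
      · exact Or.inr ⟨x - m, by omega, by omega⟩
    · rintro (hx | ⟨y, hy, rfl⟩) <;> omega
  rw [hunion, pairSum_union_map_addLeft subset_rfl subset_rfl]

theorem subadditive_neg_pairSum_Icc (hf : ∀ d, 0 ≤ f d) :
    Subadditive fun n => -pairSum f (Icc 1 n) := fun m n => by
  have := pairSum_Icc_one_add f m n
  have : 0 ≤ crossSum f (Icc 1 m) ((Icc 1 n).map (addLeftEmbedding m)) :=
    sum_nonneg fun _ _ => sum_nonneg fun _ _ => hf _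
  linarith

end PairSum

namespace Composition

variable {m n : ℕ}

/-- The renewal points `τ_i = l_1 + ⋯ + l_i`, `1 ≤ i ≤ k`. -/
def renewals (c : Composition n) : Finset ℕ :=
  (range c.length).image fun i => c.sizeUpTo (i + 1)

theorem strictMonoOn_sizeUpTo_succ (c : Composition n) :
    StrictMonoOn (fun i => c.sizeUpTo (i + 1)) (range c.length) := fun _ _ _ hj hij =>
  (c.monotone_sizeUpTo hij).trans_lt (c.sizeUpTo_strict_mono (mem_range.1 hj))

theorem renewals_subset_Icc (c : Composition n) : c.renewals ⊆ Icc 1 n := by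
  intro x hx
  obtain ⟨i, hi, rfl⟩ := mem_image.1 hx
  have hpos : c.sizeUpTo 0 < c.sizeUpTo (i + 1) :=
    (c.monotone_sizeUpTo i.zero_le).trans_lt (c.sizeUpTo_strict_mono (mem_range.1 hi))
  exact mem_Icc.2 ⟨by rwa [sizeUpTo_zero] at hpos, c.sizeUpTo_le _⟩

theorem length_append (c₁ : Composition m) (c₂ : Composition n) :
    (c₁.append c₂).length = c₁.length + c₂.length := by
  simp [length]

theorem sizeUpTo_append_of_le (c₁ : Composition m) (c₂ : Composition n) {i : ℕ}
    (hi : i ≤ c₁.length) : (c₁.append c₂).sizeUpTo i = c₁.sizeUpTo i := by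
  simp [sizeUpTo, List.take_append, Nat.sub_eq_zero_of_le hi]

theorem sizeUpTo_append_add (c₁ : Composition m) (c₂ : Composition n) (i : ℕ) :
    (c₁.append c₂).sizeUpTo (c₁.length + i) = m + c₂.sizeUpTo i := by
  simp [sizeUpTo, List.take_append, length, List.take_of_length_le]

theorem renewals_append (c₁ : Composition m) (c₂ : Composition n) :
    (c₁.append c₂).renewals = c₁.renewals ∪ c₂.renewals.map (addLeftEmbedding m) := by
  rw [renewals, length_append, range_add, image_union, renewals, renewals, map_eq_image,
    map_eq_image, image_image, image_image]
  congr 1 <;> refine image_congr fun i hi => ?_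
  · exact sizeUpTo_append_of_le c₁ c₂ (mem_range.1 hi)
  · exact sizeUpTo_append_add c₁ c₂ (i + 1)

theorem eq_nil_of_blocks_eq_append {c d : Composition m} {l : List ℕ}
    (h : d.blocks = c.blocks ++ l) : l = [] := by
  have hsum : l.sum = 0 := by
    have := congrArg List.sum h
    rw [List.sum_append, c.blocks_sum, d.blocks_sum] at this
    omega
  exact List.eq_nil_iff_forall_not_mem.2 fun x hx =>
    (d.blocks_pos (h ▸ List.mem_append_right _ hx)).ne' (List.sum_eq_zero_iff.1 hsum x hx)

theorem append_injective :
    Function.Injective fun p : Composition m × Composition n => p.1.append p.2 := by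
  rintro ⟨c₁, c₂⟩ ⟨d₁, d₂⟩ h
  have hb : c₁.blocks ++ c₂.blocks = d₁.blocks ++ d₂.blocks := congrArg blocks h
  suffices hc : c₁ = d₁ by
    subst hc
    rw [Composition.ext (List.append_cancel_left hb)]
  refine Composition.ext ?_
  rcases List.append_eq_append_iff.1 hb with ⟨l, hd, -⟩ | ⟨l, hc, -⟩
  · rw [hd, eq_nil_of_blocks_eq_append hd, List.append_nil]
  · rw [hc, eq_nil_of_blocks_eq_append hc, List.append_nil]

end Composition

open Composition

section Annealed

variable {K : ℕ → ℝ} (ρ : ℕ → ℝ) (β h : ℝ)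

theorem annWeight_eq {n : ℕ} (c : Composition n) :
    annWeight K ρ β h c = exp (c.length * (h + β ^ 2 / 2) + β ^ 2 * pairSum ρ c.renewals)
      * (c.blocks.map K).prod := by
  rw [annWeight, renewals, pairSum_image c.strictMonoOn_sizeUpTo_succ]
  congr 3
  · simp only [Finset.sum_range]
  · exact Fin.prod_univ_fun_getElem c.blocks K

theorem annWeight_append {m n : ℕ} (c₁ : Composition m) (c₂ : Composition n) :
    annWeight K ρ β h (c₁.append c₂) = annWeight K ρ β h c₁ * annWeight K ρ β h c₂
      * exp (β ^ 2 * crossSum ρ c₁.renewals (c₂.renewals.map (addLeftEmbedding m))) := by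
  rw [annWeight_eq, annWeight_eq, annWeight_eq, renewals_append,
    pairSum_union_map_addLeft c₁.renewals_subset_Icc c₂.renewals_subset_Icc, length_append,
    append_blocks, List.map_append, List.prod_append, Nat.cast_add]
  simp only [add_mul, mul_add, exp_add]
  ring

theorem annWeight_pos (hKpos : ∀ l, 1 ≤ l → 0 < K l) {n : ℕ} (c : Composition n) :
    0 < annWeight K ρ β h c :=
  mul_pos (exp_pos _) (prod_pos fun i _ => hKpos _ (c.one_le_blocksFun i))

theorem Zann_pos (hKpos : ∀ l, 1 ≤ l → 0 < K l) (n : ℕ) : 0 < Zann K ρ β h n :=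
  sum_pos (fun c _ => annWeight_pos ρ β h hKpos c) univ_nonempty

theorem Zann_mul_Zann_le (hKpos : ∀ l, 1 ≤ l → 0 < K l) (m n : ℕ) :
    Zann K ρ β h m * Zann K ρ β h n ≤ exp (β ^ 2 *
        crossSum (fun d => |ρ d|) (Icc 1 m) ((Icc 1 n).map (addLeftEmbedding m)))
      * Zann K ρ β h (m + n) := by
  set D := crossSum (fun d => |ρ d|) (Icc 1 m) ((Icc 1 n).map (addLeftEmbedding m))
  have hweight (c₁ : Composition m) (c₂ : Composition n) :
      annWeight K ρ β h c₁ * annWeight K ρ β h c₂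
        ≤ exp (β ^ 2 * D) * annWeight K ρ β h (c₁.append c₂) := by
    have hcross : -D ≤ crossSum ρ c₁.renewals (c₂.renewals.map (addLeftEmbedding m)) :=
      neg_le_of_abs_le <| (abs_crossSum_le _ _).trans <|
        crossSum_mono (fun _ => abs_nonneg _) c₁.renewals_subset_Icc
          (map_subset_map.2 c₂.renewals_subset_Icc)
    rw [annWeight_append, mul_left_comm, ← exp_add, ← mul_add]
    refine le_mul_of_one_le_right (mul_pos (annWeight_pos ρ β h hKpos c₁)
      (annWeight_pos ρ β h hKpos c₂)).le (one_le_exp (mul_nonneg (sq_nonneg β) ?_))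
    linarith
  calc Zann K ρ β h m * Zann K ρ β h n
      = ∑ p : Composition m × Composition n, annWeight K ρ β h p.1 * annWeight K ρ β h p.2 := by
        rw [Zann, Zann, sum_mul_sum, ← univ_product_univ, sum_product]
    _ ≤ ∑ p : Composition m × Composition n,
          exp (β ^ 2 * D) * annWeight K ρ β h (p.1.append p.2) :=
        sum_le_sum fun p _ => hweight p.1 p.2
    _ ≤ exp (β ^ 2 * D) * Zann K ρ β h (m + n) := by
        rw [← mul_sum, Zann]
        refine mul_le_mul_of_nonneg_left ?_ (exp_pos _).le
        rw [← sum_image fun p _ q _ hpq => append_injective hpq]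
        exact sum_le_sum_of_subset_of_nonneg (subset_univ _)
          fun c _ _ => (annWeight_pos ρ β h hKpos c).le

theorem annWeight_le (hKpos : ∀ l, 1 ≤ l → 0 < K l)
    (hKsum : HasSum (fun l => K (l + 1)) 1) {n : ℕ} (c : Composition n) :
    annWeight K ρ β h c
      ≤ exp (n * |h + β ^ 2 / 2| + β ^ 2 * pairSum (fun d => |ρ d|) (Icc 1 n)) := by
  have hK_le_one (l : ℕ) (hl : 1 ≤ l) : K l ≤ 1 := by
    obtain ⟨j, rfl⟩ := Nat.exists_eq_add_of_le' hl
    exact le_hasSum hKsum j fun i _ => (hKpos (i + 1) i.succ_pos).le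
  have hprod : ∏ i : Fin c.length, K (c.blocksFun i) ≤ 1 :=
    prod_le_one (fun i _ => (hKpos _ (c.one_le_blocksFun i)).le)
      fun i _ => hK_le_one _ (c.one_le_blocksFun i)
  have hlength : (c.length : ℝ) * (h + β ^ 2 / 2) ≤ n * |h + β ^ 2 / 2| :=
    (mul_le_mul_of_nonneg_left (le_abs_self _) (Nat.cast_nonneg _)).trans
      (mul_le_mul_of_nonneg_right (by exact_mod_cast c.length_le) (abs_nonneg _))
  have hpair : pairSum ρ c.renewals ≤ pairSum (fun d => |ρ d|) (Icc 1 n) :=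
    (le_abs_self _).trans <| (abs_pairSum_le _).trans <|
      pairSum_mono (fun _ => abs_nonneg _) c.renewals_subset_Icc
  rw [annWeight_eq, ← Fin.prod_univ_fun_getElem]
  exact (mul_le_of_le_one_right (exp_pos _).le hprod).trans <|
    exp_le_exp.2 (add_le_add hlength (mul_le_mul_of_nonneg_left hpair (sq_nonneg β)))

theorem log_Zann_le (hKpos : ∀ l, 1 ≤ l → 0 < K l)
    (hKsum : HasSum (fun l => K (l + 1)) 1) (n : ℕ) :
    log (Zann K ρ β h n)
      ≤ n * (log 2 + |h + β ^ 2 / 2|) + β ^ 2 * pairSum (fun d => |ρ d|) (Icc 1 n) := by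
  set E := n * |h + β ^ 2 / 2| + β ^ 2 * pairSum (fun d => |ρ d|) (Icc 1 n)
  have hcard : (Fintype.card (Composition n) : ℝ) ≤ 2 ^ n := by
    rw [composition_card, Nat.cast_pow, Nat.cast_ofNat]
    exact pow_le_pow_right₀ one_le_two (Nat.sub_le n 1)
  have hZ : Zann K ρ β h n ≤ 2 ^ n * exp E :=
    calc Zann K ρ β h n ≤ Fintype.card (Composition n) • exp E :=
          sum_le_card_nsmul _ _ _ fun c _ => annWeight_le ρ β h hKpos hKsum c
      _ ≤ 2 ^ n * exp E := by
          rw [nsmul_eq_mul]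
          exact mul_le_mul_of_nonneg_right hcard (exp_pos _).le
  calc log (Zann K ρ β h n) ≤ log (2 ^ n * exp E) := log_le_log (Zann_pos ρ β h hKpos n) hZ
    _ = n * (log 2 + |h + β ^ 2 / 2|) + β ^ 2 * pairSum (fun d => |ρ d|) (Icc 1 n) := by
        rw [log_mul (by positivity) (exp_pos _).ne', log_pow, log_exp]
        ring

theorem subadditive_neg_log_Zann (hKpos : ∀ l, 1 ≤ l → 0 < K l) :
    Subadditive fun n =>
      -log (Zann K ρ β h n) - β ^ 2 * pairSum (fun d => |ρ d|) (Icc 1 n) := fun m n => by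
  have hlog := log_le_log (mul_pos (Zann_pos ρ β h hKpos m) (Zann_pos ρ β h hKpos n))
    (Zann_mul_Zann_le ρ β h hKpos m n)
  rw [log_mul (Zann_pos ρ β h hKpos m).ne' (Zann_pos ρ β h hKpos n).ne',
    log_mul (exp_pos _).ne' (Zann_pos ρ β h hKpos (m + n)).ne', log_exp] at hlog
  linear_combination hlog - β ^ 2 * pairSum_Icc_one_add (fun d => |ρ d|) m n

end Annealed

/-- If `Σ_{n≥1} |ρ(n)| < ∞` then for every `β ≥ 0` and `h ∈ ℝ` the annealed free energy
`F^a(β,h) = lim (1/n) log Z_n(β,h)` exists and is finite. -/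
theorem annealed_free_energy_exists (K ρ : ℕ → ℝ)
    (hKpos : ∀ n : ℕ, 1 ≤ n → 0 < K n)
    (hKsum : HasSum (fun n : ℕ => K (n + 1)) 1)
    (hρ : Summable fun n : ℕ => |ρ (n + 1)|) :
    ∀ β h : ℝ, 0 ≤ β →
      ∃ Fa : ℝ, Tendsto (fun n : ℕ => (1 / (n : ℝ)) * Real.log (Zann K ρ β h n))
        atTop (nhds Fa) := by
  intro β h _
  set S := ∑' j, |ρ (j + 1)|
  have hP (n : ℕ) : pairSum (fun d => |ρ d|) (Icc 1 n) ≤ n * S := by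
    simpa using pairSum_abs_le_card_mul_tsum hρ (Icc 1 n)
  obtain ⟨p, hp⟩ := (subadditive_neg_pairSum_Icc fun d => abs_nonneg (ρ d)).exists_tendsto_div
    (C := -S) fun n _ => by linear_combination hP n
  obtain ⟨q, hq⟩ := (subadditive_neg_log_Zann ρ β h hKpos).exists_tendsto_div
    (C := -(log 2 + |h + β ^ 2 / 2| + 2 * β ^ 2 * S)) fun n _ => by
      linear_combination log_Zann_le ρ β h hKpos hKsum n
        + 2 * mul_le_mul_of_nonneg_left (hP n) (sq_nonneg β)
  refine ⟨-q + β ^ 2 * p, (hq.neg.add (hp.const_mul (β ^ 2))).congr fun n => ?_⟩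
  ring
end

section
/- Let φ : Σ → ℝ be a potential with Σ_{n≥1} V_n(φ) < ∞ and sup_{x∈Σ} Σ_{s≥1} e^{φ(sx)} < ∞. Then for every a ∈ ℤ≥1 the limit P_G(φ) := lim_{n→∞} (1/n) log Z_n(φ,a) exists, is a finite real number, does not depend on a, and satisfies P_G(φ) ≤ log ( sup_{x∈Σ} Σ_{s≥1} e^{φ(sx)} ). -/
/-!
Summability of the variations gives bounded distortion: Birkhoff sums `φ_n` of two points with
the same first `n` symbols differ by at most `B = Σ V_k(φ)`. Gluing an `m`-periodic and an
`n`-periodic point starting with `a` injectively yields an `(m + n)`-periodic one, so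
`log Z_n(φ,a)` is superadditive up to `2B` and Fekete's lemma gives the limit. Coding a periodic
point by its first `n` symbols bounds `Z_n(φ,a)` by `e^B (sup_x Σ_s e^{φ(sx)})^n`, which bounds
the limit; overwriting the symbols `x_{kn} = b` by `a` shows `Z_n(φ,b) ≤ C_{a,b} Z_n(φ,a)`, so
the limit does not depend on `a`.
-/

open Real Filter Finset

/-- The space `Σ = (ℤ≥1)^ℕ` of sequences of positive integers. -/
abbrev SSeq : Type := ℕ → ℕ+

/-- The left shift `T` on `Σ`. -/
def shift (x : SSeq) : SSeq := fun i => x (i + 1)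

/-- Concatenation `sx = (s, x_0, x_1, …)`. -/
def consSeq (s : ℕ+) (x : SSeq) : SSeq := fun i => match i with
  | 0 => s
  | j + 1 => x j

/-- The Birkhoff sum `φ_n = Σ_{k=0}^{n−1} φ∘T^k`. -/
noncomputable def birkhoff (φ : SSeq → ℝ) (n : ℕ) (x : SSeq) : ℝ :=
  ∑ k ∈ Finset.range n, φ (shift^[k] x)

/-- The set of variations `{|φ(x) − φ(y)| : x_i = y_i for all i < n}`. -/
def varSet (φ : SSeq → ℝ) (n : ℕ) : Set ℝ :=
  {d | ∃ x y : SSeq, (∀ i < n, x i = y i) ∧ d = |φ x - φ y|}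

/-- The `n`-th variation `V_n(φ)`. -/
noncomputable def Vn (φ : SSeq → ℝ) (n : ℕ) : ℝ := sSup (varSet φ n)

open scoped ENNReal in
/-- `Z_n(φ,a) = Σ_{x : T^n x = x, x_0 = a} e^{φ_n(x)}`, valued in `[0,∞]`. -/
noncomputable def Zg (φ : SSeq → ℝ) (a : ℕ+) (n : ℕ) : ℝ≥0∞ :=
  ∑' x : {x : SSeq // shift^[n] x = x ∧ x 0 = a}, ENNReal.ofReal (Real.exp (birkhoff φ n x))

/-- `P` is the Gurevich pressure of `φ`: for every `a`,
`(1/n) log Z_n(φ,a) → P`. -/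
def IsGurevich (φ : SSeq → ℝ) (P : ℝ) : Prop :=
  ∀ a : ℕ+, Tendsto (fun n : ℕ => (1 / (n : ℝ)) * Real.log (Zg φ a n).toReal) atTop (nhds P)

open scoped ENNReal in
/-- `sup_{x∈Σ} Σ_{s≥1} e^{φ(sx)}`, valued in `[0,∞]`. -/
noncomputable def opNorm (φ : SSeq → ℝ) : ℝ≥0∞ :=
  ⨆ x : SSeq, ∑' s : ℕ+, ENNReal.ofReal (Real.exp (φ (consSeq s x)))

open scoped ENNReal Topology

lemma exists_le_tendsto_div_of_superadditive_up_to {u : ℕ → ℝ} {C D L : ℝ}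
    (hsup : ∀ m n, 0 < m → 0 < n → u m + u n - C ≤ u (m + n))
    (hub : ∀ n, 0 < n → u n ≤ D + n * L) :
    ∃ p ≤ L, Tendsto (fun n => u n / n) atTop (𝓝 p) := by
  -- `C - u` is subadditive once its value at `0` is replaced by `0`.
  set g : ℕ → ℝ := fun n => if n = 0 then 0 else C - u n with hg
  have hsub : Subadditive g := by
    intro m n
    rcases m.eq_zero_or_pos with rfl | hm
    · simp [hg]
    rcases n.eq_zero_or_pos with rfl | hn
    · simp [hg]
    simp only [hg, hm.ne', hn.ne', (Nat.add_pos_left hm n).ne', if_false]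
    linarith [hsup m n hm hn]
  have hbdd : BddBelow (Set.range fun n => g n / n) := by
    refine ⟨-|C - D| - |L|, ?_⟩
    rintro _ ⟨n, rfl⟩
    rcases n.eq_zero_or_pos with rfl | hn
    · simp only [hg, if_true, Nat.cast_zero, div_zero]
      linarith [abs_nonneg (C - D), abs_nonneg L]
    have hn' : (1 : ℝ) ≤ n := by exact_mod_cast hn
    have : -|C - D| * n - |L| * n ≤ C - u n := by
      have h1 : |C - D| ≤ |C - D| * n := le_mul_of_one_le_right (abs_nonneg _) hn'
      have h2 : n * L ≤ |L| * n := by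
        rw [mul_comm]; exact mul_le_mul_of_nonneg_right (le_abs_self L) (by positivity)
      linarith [hub n hn, neg_abs_le (C - D)]
    simp only [hg, hn.ne', if_false]
    rw [le_div_iff₀ (by positivity)]
    nlinarith [abs_nonneg (C - D), abs_nonneg L]
  have hlim : Tendsto (fun n : ℕ => u n / n) atTop (𝓝 (0 - hsub.lim)) := by
    refine ((tendsto_const_div_atTop_nhds_zero_nat C).sub (hsub.tendsto_lim hbdd)).congr' ?_
    filter_upwards [eventually_gt_atTop 0] with n hn
    simp only [hg, hn.ne', if_false, sub_div, sub_sub_cancel]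
  refine ⟨_, ?_, hlim⟩
  have hbound : Tendsto (fun n : ℕ => D / n + L) atTop (𝓝 (0 + L)) :=
    (tendsto_const_div_atTop_nhds_zero_nat D).add_const L
  refine (zero_add L) ▸ le_of_tendsto_of_tendsto hlim hbound ?_
  filter_upwards [eventually_gt_atTop 0] with n hn
  rw [div_add' _ _ _ (by positivity)]
  gcongr
  linarith [hub n hn]

lemma le_of_tendsto_div_of_add_le {u v : ℕ → ℝ} {p q c : ℝ}
    (hu : Tendsto (fun n => u n / n) atTop (𝓝 p))
    (hv : Tendsto (fun n => v n / n) atTop (𝓝 q))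
    (hle : ∀ n, 0 < n → c + v n ≤ u n) : q ≤ p := by
  have hcv : Tendsto (fun n : ℕ => c / n + v n / n) atTop (𝓝 (0 + q)) :=
    (tendsto_const_div_atTop_nhds_zero_nat c).add hv
  refine (zero_add q) ▸ le_of_tendsto_of_tendsto hcv hu ?_
  filter_upwards [eventually_gt_atTop 0] with n hn
  rw [← add_div]
  gcongr
  exact hle n hn

lemma add_log_toReal_le {c : ℝ} {X Y : ℝ≥0∞} (hX : X ≠ 0) (hY : Y ≠ ⊤)
    (h : ENNReal.ofReal (exp c) * X ≤ Y) : c + log X.toReal ≤ log Y.toReal := by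
  have hXtop : X ≠ ⊤ := by
    rintro rfl
    rw [ENNReal.mul_top (by simpa using exp_pos c), top_le_iff] at h
    exact hY h
  have h' : exp c * X.toReal ≤ Y.toReal := by
    simpa [ENNReal.toReal_mul, (exp_pos c).le] using ENNReal.toReal_mono hY h
  have hXpos := ENNReal.toReal_pos hX hXtop
  calc c + log X.toReal = log (exp c * X.toReal) := by
        rw [log_mul (exp_pos c).ne' hXpos.ne', log_exp]
    _ ≤ log Y.toReal := log_le_log (by positivity) h'

lemma ENNReal.mul_tsum_le_tsum_of_injective {α β : Type*} {f : α → β}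
    (hf : Function.Injective f) {g : α → ℝ≥0∞} {h : β → ℝ≥0∞} {c : ℝ≥0∞}
    (hle : ∀ x, c * g x ≤ h (f x)) :
    c * ∑' x, g x ≤ ∑' y, h y := by
  rw [← ENNReal.tsum_mul_left]
  exact (ENNReal.tsum_le_tsum hle).trans (ENNReal.tsum_comp_le_tsum_of_injective hf h)

lemma ofReal_exp_mul_ofReal_exp (s t : ℝ) :
    ENNReal.ofReal (exp s) * ENNReal.ofReal (exp t) = ENNReal.ofReal (exp (s + t)) := by
  rw [← ENNReal.ofReal_mul (exp_pos s).le, exp_add]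

lemma shift_iterate_apply (k : ℕ) (x : SSeq) (i : ℕ) : (shift^[k] x) i = x (i + k) := by
  induction k generalizing x with
  | zero => rfl
  | succ k ih => rw [Function.iterate_succ_apply, ih]; simp [shift, Nat.add_assoc]

lemma shift_consSeq (s : ℕ+) (x : SSeq) : shift (consSeq s x) = x := rfl

lemma periodic_of_shift_iterate_eq {x : SSeq} {n : ℕ} (hx : shift^[n] x = x) :
    Function.Periodic x n := fun i => by rw [← shift_iterate_apply n x, hx]

lemma eq_of_periodic_of_eqOn_lt {x y : SSeq} {n : ℕ} (hx : Function.Periodic x n)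
    (hy : Function.Periodic y n) (hn : 0 < n) (h : ∀ i < n, x i = y i) : x = y := by
  funext i
  rw [← hx.map_mod_nat, ← hy.map_mod_nat]
  exact h _ (Nat.mod_lt i hn)

def periodize (n : ℕ) (x : SSeq) : SSeq := fun i => x (i % n)

lemma shift_iterate_periodize (n : ℕ) (x : SSeq) :
    shift^[n] (periodize n x) = periodize n x := by
  funext i
  simp [shift_iterate_apply, periodize]

lemma periodize_apply_of_lt {n i : ℕ} (x : SSeq) (hi : i < n) : periodize n x i = x i := by
  simp [periodize, Nat.mod_eq_of_lt hi]

def prependWord {n : ℕ} (w : Fin n → ℕ+) (z : SSeq) : SSeq :=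
  fun i => if h : i < n then w ⟨i, h⟩ else z (i - n)

lemma prependWord_apply_of_lt {n i : ℕ} (w : Fin n → ℕ+) (z : SSeq) (hi : i < n) :
    prependWord w z i = w ⟨i, hi⟩ := dif_pos hi

lemma prependWord_apply_add {n : ℕ} (w : Fin n → ℕ+) (z : SSeq) (i : ℕ) :
    prependWord w z (i + n) = z i := by
  simp [prependWord]

lemma prependWord_cons {n : ℕ} (s : ℕ+) (w : Fin n → ℕ+) (z : SSeq) :
    prependWord (Fin.cons s w) z = consSeq s (prependWord w z) := by
  funext i
  cases i with
  | zero => rfl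
  | succ i =>
    by_cases hi : i < n
    · simp [prependWord, consSeq, hi, Fin.cons]
    · simp [prependWord, consSeq, hi]

lemma birkhoff_add (φ : SSeq → ℝ) (m n : ℕ) (x : SSeq) :
    birkhoff φ (m + n) x = birkhoff φ m x + birkhoff φ n (shift^[m] x) := by
  rw [birkhoff, Finset.sum_range_add]
  congr 1
  refine Finset.sum_congr rfl fun k _ => ?_
  rw [add_comm, Function.iterate_add_apply]

lemma birkhoff_one (φ : SSeq → ℝ) (x : SSeq) : birkhoff φ 1 x = φ x := by
  simp [birkhoff]

lemma birkhoff_consSeq (φ : SSeq → ℝ) (n : ℕ) (s : ℕ+) (x : SSeq) :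
    birkhoff φ (1 + n) (consSeq s x) = φ (consSeq s x) + birkhoff φ n x := by
  rw [birkhoff_add, birkhoff_one, Function.iterate_one, shift_consSeq]

def HasBoundedDistortion (φ : SSeq → ℝ) (B : ℝ) : Prop :=
  ∀ n (x y : SSeq), (∀ i < n, x i = y i) → |birkhoff φ n x - birkhoff φ n y| ≤ B

lemma hasBoundedDistortion_tsum_Vn {φ : SSeq → ℝ}
    (hbdd : ∀ n : ℕ, 1 ≤ n → BddAbove (varSet φ n))
    (hsum : Summable fun n : ℕ => Vn φ (n + 1)) :
    HasBoundedDistortion φ (∑' n : ℕ, Vn φ (n + 1)) := by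
  intro n x y hxy
  have hV : ∀ k, 0 ≤ Vn φ (k + 1) := fun k =>
    le_csSup (hbdd _ k.succ_pos) ⟨x, x, fun _ _ => rfl, by simp⟩
  -- `T^k x` and `T^k y` share `n - k` coordinates, so their `φ`-values differ by `≤ V_{n-k}`.
  calc |birkhoff φ n x - birkhoff φ n y|
      ≤ ∑ k ∈ range n, |φ (shift^[k] x) - φ (shift^[k] y)| := by
        rw [birkhoff, birkhoff, ← Finset.sum_sub_distrib]
        exact Finset.abs_sum_le_sum_abs _ _
    _ ≤ ∑ k ∈ range n, Vn φ (n - 1 - k + 1) := by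
        refine Finset.sum_le_sum fun k hk => ?_
        rw [Finset.mem_range] at hk
        refine le_csSup (hbdd _ (Nat.succ_pos _)) ⟨_, _, fun i hi => ?_, rfl⟩
        rw [shift_iterate_apply, shift_iterate_apply]
        exact hxy _ (by omega)
    _ = ∑ k ∈ range n, Vn φ (k + 1) := Finset.sum_range_reflect (fun k => Vn φ (k + 1)) n
    _ ≤ ∑' k, Vn φ (k + 1) := hsum.sum_le_tsum _ fun k _ => hV k

section PartitionFunction

variable {φ : SSeq → ℝ} {B : ℝ}

lemma tsum_cons_le_opNorm (φ : SSeq → ℝ) (x : SSeq) :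
    ∑' s : ℕ+, ENNReal.ofReal (exp (φ (consSeq s x))) ≤ opNorm φ :=
  le_iSup (fun x => ∑' s : ℕ+, ENNReal.ofReal (exp (φ (consSeq s x)))) x

lemma tsum_prependWord_le_opNorm_pow (φ : SSeq → ℝ) (n : ℕ) (z : SSeq) :
    ∑' w : Fin n → ℕ+, ENNReal.ofReal (exp (birkhoff φ n (prependWord w z))) ≤
      opNorm φ ^ n := by
  induction n with
  | zero => simp [birkhoff]
  | succ n ih =>
    set y : (Fin n → ℕ+) → SSeq := fun w => prependWord w z
    calc ∑' w : Fin (n + 1) → ℕ+, ENNReal.ofReal (exp (birkhoff φ (n + 1) (prependWord w z)))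
        = ∑' p : ℕ+ × (Fin n → ℕ+), ENNReal.ofReal (exp (φ (consSeq p.1 (y p.2)))) *
            ENNReal.ofReal (exp (birkhoff φ n (y p.2))) := by
          rw [← (Fin.consEquiv fun _ => ℕ+).tsum_eq]
          refine tsum_congr fun p => ?_
          rw [ofReal_exp_mul_ofReal_exp,
            show (Fin.consEquiv fun _ => ℕ+) p = Fin.cons p.1 p.2 from rfl,
            prependWord_cons, add_comm n, birkhoff_consSeq]
      _ = ∑' w, (∑' s, ENNReal.ofReal (exp (φ (consSeq s (y w))))) *
            ENNReal.ofReal (exp (birkhoff φ n (y w))) := by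
          rw [ENNReal.tsum_prod', ENNReal.tsum_comm]
          simp only [ENNReal.tsum_mul_right]
      _ ≤ ∑' w, opNorm φ * ENNReal.ofReal (exp (birkhoff φ n (y w))) :=
          ENNReal.tsum_le_tsum fun w => by gcongr; exact tsum_cons_le_opNorm φ (y w)
      _ ≤ opNorm φ ^ (n + 1) := by
          rw [ENNReal.tsum_mul_left, pow_succ']
          gcongr

abbrev PeriodicSeq (n : ℕ) (a : ℕ+) : Type := {x : SSeq // shift^[n] x = x ∧ x 0 = a}

lemma PeriodicSeq.periodic {n : ℕ} {a : ℕ+} (x : PeriodicSeq n a) :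
    Function.Periodic x.1 n :=
  periodic_of_shift_iterate_eq x.2.1

lemma PeriodicSeq.ext_of_lt {n : ℕ} {a : ℕ+} (hn : 0 < n) {x y : PeriodicSeq n a}
    (h : ∀ i < n, x.1 i = y.1 i) : x = y :=
  Subtype.ext (eq_of_periodic_of_eqOn_lt x.periodic y.periodic hn h)

lemma Zg_ne_zero (φ : SSeq → ℝ) (a : ℕ+) (n : ℕ) : Zg φ a n ≠ 0 := by
  have hconst : shift^[n] (fun _ => a : SSeq) = fun _ => a := by
    funext i; rw [shift_iterate_apply]
  refine (lt_of_lt_of_le ?_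
    (ENNReal.le_tsum (⟨fun _ => a, hconst, rfl⟩ : PeriodicSeq n a))).ne'
  simpa using exp_pos _

lemma ofReal_exp_neg_mul_Zg_le (hB : HasBoundedDistortion φ B) (a : ℕ+) {n : ℕ} (hn : 0 < n) :
    ENNReal.ofReal (exp (-B)) * Zg φ a n ≤ opNorm φ ^ n := by
  set word : PeriodicSeq n a → (Fin n → ℕ+) := fun x i => x.1 i
  have hinj : Function.Injective word := fun x y h =>
    PeriodicSeq.ext_of_lt hn fun i hi => congrFun h ⟨i, hi⟩
  refine le_trans (ENNReal.mul_tsum_le_tsum_of_injective hinj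
    (h := fun w => ENNReal.ofReal (exp (birkhoff φ n (prependWord w fun _ => 1)))) fun x => ?_)
    (tsum_prependWord_le_opNorm_pow φ n _)
  rw [ofReal_exp_mul_ofReal_exp]
  gcongr
  have := hB n _ _ fun i hi => (prependWord_apply_of_lt (word x) (fun _ => 1) hi).symm
  linarith [(abs_le.1 this).2]

lemma Zg_ne_top (hB : HasBoundedDistortion φ B) (hnorm : opNorm φ ≠ ⊤) (a : ℕ+)
    {n : ℕ} (hn : 0 < n) : Zg φ a n ≠ ⊤ := by
  have hc : ENNReal.ofReal (exp (-B)) ≠ 0 := by simpa using exp_pos (-B)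
  exact (ENNReal.lt_top_of_mul_ne_top_right
    (ne_top_of_le_ne_top (ENNReal.pow_ne_top hnorm) (ofReal_exp_neg_mul_Zg_le hB a hn)) hc).ne

lemma toReal_Zg_pos (hB : HasBoundedDistortion φ B) (hnorm : opNorm φ ≠ ⊤) (a : ℕ+)
    {n : ℕ} (hn : 0 < n) : 0 < (Zg φ a n).toReal :=
  ENNReal.toReal_pos (Zg_ne_zero φ a n) (Zg_ne_top hB hnorm a hn)

lemma ofReal_exp_mul_Zg_mul_Zg_le (hB : HasBoundedDistortion φ B) (a : ℕ+) {m n : ℕ}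
    (hm : 0 < m) (hn : 0 < n) :
    ENNReal.ofReal (exp (-(2 * B))) * (Zg φ a m * Zg φ a n) ≤ Zg φ a (m + n) := by
  set glue : SSeq → SSeq → SSeq :=
    fun u v => periodize (m + n) (prependWord (fun i : Fin m => u i) v)
  have glue_left : ∀ u v, ∀ i < m, glue u v i = u i := fun u v i hi => by
    show periodize _ _ i = _
    rw [periodize_apply_of_lt _ (by omega), prependWord_apply_of_lt _ _ hi]
  have glue_right : ∀ u v, ∀ i < n, glue u v (i + m) = v i := fun u v i hi => by
    show periodize _ _ (i + m) = _
    rw [periodize_apply_of_lt _ (by omega), prependWord_apply_add]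
  set G : PeriodicSeq m a × PeriodicSeq n a → PeriodicSeq (m + n) a := fun p =>
    ⟨glue p.1.1 p.2.1, shift_iterate_periodize _ _, (glue_left _ _ 0 hm).trans p.1.2.2⟩
  have hinj : Function.Injective G := fun p q h => by
    have h' := congrArg Subtype.val h
    refine Prod.ext (PeriodicSeq.ext_of_lt hm fun i hi => ?_)
      (PeriodicSeq.ext_of_lt hn fun i hi => ?_)
    · rw [← glue_left p.1.1 p.2.1 i hi, ← glue_left q.1.1 q.2.1 i hi]
      exact congrFun h' i
    · rw [← glue_right p.1.1 p.2.1 i hi, ← glue_right q.1.1 q.2.1 i hi]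
      exact congrFun h' (i + m)
  have hprod : Zg φ a m * Zg φ a n = ∑' p : PeriodicSeq m a × PeriodicSeq n a,
      ENNReal.ofReal (exp (birkhoff φ m p.1)) * ENNReal.ofReal (exp (birkhoff φ n p.2)) := by
    simp_rw [ENNReal.tsum_prod', ENNReal.tsum_mul_left, ENNReal.tsum_mul_right]
    rfl
  rw [hprod]
  refine ENNReal.mul_tsum_le_tsum_of_injective hinj fun p => ?_
  rw [ofReal_exp_mul_ofReal_exp, ofReal_exp_mul_ofReal_exp]
  gcongr
  have h₁ := hB m _ _ (glue_left p.1.1 p.2.1)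
  have h₂ := hB n (shift^[m] (G p).1) p.2.1 fun i hi => by
    rw [shift_iterate_apply]; exact glue_right _ _ i hi
  rw [birkhoff_add]
  linarith [(abs_le.1 h₁).1, (abs_le.1 h₂).1]

lemma ofReal_exp_mul_Zg_le_Zg (hB : HasBoundedDistortion φ B) (a b : ℕ+) {n : ℕ}
    (hn : 0 < n) :
    ENNReal.ofReal (exp (φ (fun _ => a) - φ (fun _ => b) - 3 * B)) * Zg φ b n ≤ Zg φ a n := by
  -- Replace every symbol `x (k n) = b` of a periodic point by `a`.
  set R : PeriodicSeq n b → PeriodicSeq n a := fun x =>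
    ⟨periodize n (consSeq a (shift x.1)), shift_iterate_periodize _ _,
      periodize_apply_of_lt _ hn⟩
  have hR_succ : ∀ x, ∀ i, i + 1 < n → (R x).1 (i + 1) = x.1 (i + 1) := fun x i hi =>
    periodize_apply_of_lt (consSeq a (shift x.1)) hi
  have hinj : Function.Injective R := fun x y h => by
    refine PeriodicSeq.ext_of_lt hn fun i hi => ?_
    cases i with
    | zero => rw [x.2.2, y.2.2]
    | succ i => rw [← hR_succ x i hi, ← hR_succ y i hi, h]
  refine ENNReal.mul_tsum_le_tsum_of_injective hinj fun x => ?_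
  rw [ofReal_exp_mul_ofReal_exp]
  gcongr
  obtain ⟨k, rfl⟩ : ∃ k, n = 1 + k := ⟨n - 1, by omega⟩
  have h₁ := hB 1 (R x).1 (fun _ => a) fun i hi => by
    obtain rfl : i = 0 := by omega
    exact (R x).2.2
  have h₂ := hB 1 x.1 (fun _ => b) fun i hi => by
    obtain rfl : i = 0 := by omega
    exact x.2.2
  have h₃ := hB k (shift (R x).1) (shift x.1) fun i hi => hR_succ x i (by omega)
  rw [birkhoff_one, birkhoff_one] at h₁ h₂
  rw [birkhoff_add, birkhoff_add, birkhoff_one, birkhoff_one, Function.iterate_one]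
  linarith [(abs_le.1 h₁).1, (abs_le.1 h₂).2, (abs_le.1 h₃).1]

lemma log_Zg_le (hB : HasBoundedDistortion φ B) (hnorm : opNorm φ ≠ ⊤) (a : ℕ+) {n : ℕ}
    (hn : 0 < n) :
    log (Zg φ a n).toReal ≤ B + n * log (opNorm φ).toReal := by
  have := add_log_toReal_le (Zg_ne_zero φ a n) (ENNReal.pow_ne_top hnorm)
    (ofReal_exp_neg_mul_Zg_le hB a hn)
  rw [ENNReal.toReal_pow, Real.log_pow] at this
  linarith

lemma log_Zg_add_log_Zg_le (hB : HasBoundedDistortion φ B) (hnorm : opNorm φ ≠ ⊤) (a : ℕ+)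
    {m n : ℕ} (hm : 0 < m) (hn : 0 < n) :
    log (Zg φ a m).toReal + log (Zg φ a n).toReal - 2 * B ≤ log (Zg φ a (m + n)).toReal := by
  have := add_log_toReal_le (mul_ne_zero (Zg_ne_zero φ a m) (Zg_ne_zero φ a n))
    (Zg_ne_top hB hnorm a (by omega)) (ofReal_exp_mul_Zg_mul_Zg_le hB a hm hn)
  rw [ENNReal.toReal_mul,
    log_mul (toReal_Zg_pos hB hnorm a hm).ne' (toReal_Zg_pos hB hnorm a hn).ne'] at this
  linarith

lemma add_log_Zg_le_log_Zg (hB : HasBoundedDistortion φ B) (hnorm : opNorm φ ≠ ⊤) (a b : ℕ+)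
    {n : ℕ} (hn : 0 < n) :
    φ (fun _ => a) - φ (fun _ => b) - 3 * B + log (Zg φ b n).toReal ≤ log (Zg φ a n).toReal :=
  add_log_toReal_le (Zg_ne_zero φ b n) (Zg_ne_top hB hnorm a hn)
    (ofReal_exp_mul_Zg_le_Zg hB a b hn)

end PartitionFunction

/-- If `φ` has summable variations and `sup_x Σ_s e^{φ(sx)} < ∞`, the Gurevich pressure
`P_G(φ) = lim (1/n) log Z_n(φ,a)` exists, is finite, does not depend on `a`, and is at most
`log(sup_x Σ_s e^{φ(sx)})`. -/
theorem gurevich_pressure_exists (φ : SSeq → ℝ)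
    (hbdd : ∀ n : ℕ, 1 ≤ n → BddAbove (varSet φ n))
    (hsum : Summable fun n : ℕ => Vn φ (n + 1))
    (hnorm : opNorm φ ≠ ⊤) :
    ∃ P : ℝ, IsGurevich φ P ∧ P ≤ Real.log (opNorm φ).toReal := by
  have hB := hasBoundedDistortion_tsum_Vn hbdd hsum
  choose P hPle hP using fun a : ℕ+ => exists_le_tendsto_div_of_superadditive_up_to
    (fun _ _ => log_Zg_add_log_Zg_le hB hnorm a) (fun _ => log_Zg_le hB hnorm a)
  have hP_le : ∀ a b, P b ≤ P a := fun a b =>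
    le_of_tendsto_div_of_add_le (hP a) (hP b) fun n => add_log_Zg_le_log_Zg hB hnorm a b
  refine ⟨P 1, fun a => ?_, hPle 1⟩
  simpa [le_antisymm (hP_le 1 a) (hP_le a 1), div_eq_inv_mul] using hP a
end

section
/- Suppose Σ_{n≥1} |ρ(n)| < ∞. Then: (a) for every n ≥ 1, V_n(G) ≤ 2 Σ_{k≥n} |ρ(k)|; (b) for every β ≥ 0, every constant c ∈ ℝ and every F ≥ 0, V_n(β²G + log K∘π_0) = V_n(β²G + log K∘π_0 − c − F·π_0) = β² V_n(G) for all n ≥ 1; (c) consequently, if Σ_{n≥1} n|ρ(n)| < ∞ then Σ_{n≥1} V_n(φ_β) < ∞, and if there exist C > 0 and ϱ ∈ (0,1) with |ρ(n)| ≤ C ϱ^n for all n ≥ 1, then V_n(φ_β) ≤ (2Cβ²/(1−ϱ)) ϱ^n for all n ≥ 1. -/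
open Real Filter Finset

/-- The potential `G(t) = Σ_{k≥0} ρ(t_0+⋯+t_k)`. -/
noncomputable def Gpot (ρ : ℕ → ℝ) (t : SSeq) : ℝ :=
  ∑' k : ℕ, ρ (∑ i ∈ Finset.range (k + 1), (t i : ℕ))

/-- The potential `φ_β = β²G + log K ∘ π_0`. -/
noncomputable def phiBeta (K ρ : ℕ → ℝ) (β : ℝ) (t : SSeq) : ℝ :=
  β ^ 2 * Gpot ρ t + Real.log (K (t 0))

/-!
Two sequences that agree on their first `n` coordinates have the same first `n` partial sums
`t_0 + ⋯ + t_k`, so `G(x) - G(y)` is the difference of two tails `∑_{k ≥ n} ρ(t_0 + ⋯ + t_k)`.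
The arguments of such a tail are distinct integers `≥ n`, so each tail is bounded by
`∑_{m ≥ n} |ρ(m)|`. The term `log K ∘ π_0 - c - F π_0` depends on `t_0` only, hence does not
contribute to `V_n` for `n ≥ 1`. Finally `∑_n ∑_{m ≥ n} |ρ(m)| = ∑_m (m + 1) |ρ(m)|`, and a
geometric bound on `ρ` gives a geometric bound on its tails.
-/

open Function
open scoped Pointwise

def cumSum (t : SSeq) (k : ℕ) : ℕ := ∑ i ∈ range (k + 1), (t i : ℕ)

lemma cumSum_strictMono (t : SSeq) : StrictMono (cumSum t) :=
  strictMono_nat_of_lt_succ fun k => by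
    rw [cumSum, cumSum, sum_range_succ _ (k + 1)]
    exact Nat.lt_add_of_pos_right (t (k + 1)).pos

lemma cumSum_eq_of_forall_lt_eq {x y : SSeq} {n k : ℕ} (hxy : ∀ i < n, x i = y i)
    (hk : k < n) : cumSum x k = cumSum y k :=
  sum_congr rfl fun i hi => by rw [hxy i ((mem_range.1 hi).trans_le hk)]

lemma abs_tsum_comp_le_tsum_nat_add {ρ : ℕ → ℝ} (hρ : Summable fun m => |ρ m|) {g : ℕ → ℕ}
    (hg : Injective g) {n : ℕ} (hgn : ∀ k, n ≤ g k) :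
    |∑' k, ρ (g k)| ≤ ∑' k, |ρ (n + k)| := by
  have hshift : Injective fun k => g k - n := fun a b hab => hg <| by
    have := hgn a; have := hgn b; simp only at hab; omega
  calc |∑' k, ρ (g k)| ≤ ∑' k, |ρ (g k)| := by
        simpa only [Real.norm_eq_abs] using
          norm_tsum_le_tsum_norm (f := fun k => ρ (g k)) (hρ.comp_injective hg)
    _ = ∑' k, |ρ (n + (g k - n))| :=
        tsum_congr fun k => by rw [Nat.add_sub_cancel' (hgn k)]
    _ ≤ ∑' k, |ρ (n + k)| :=
        tsum_comp_le_tsum_of_inj (f := fun k => |ρ (n + k)|)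
          ((summable_nat_add_iff n).2 hρ |>.congr fun k => by rw [add_comm])
          (fun _ => abs_nonneg _) hshift

lemma abs_Gpot_sub_le {ρ : ℕ → ℝ} (hρ : Summable fun m => |ρ m|) {x y : SSeq} {n : ℕ}
    (hxy : ∀ i < n, x i = y i) : |Gpot ρ x - Gpot ρ y| ≤ 2 * ∑' k, |ρ (n + k)| := by
  have split (t : SSeq) : Gpot ρ t = ∑ k ∈ range n, ρ (cumSum t k) + ∑' k, ρ (cumSum t (k + n)) :=
    (((hρ.comp_injective (cumSum_strictMono t).injective).of_abs).sum_add_tsum_nat_add n).symm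
  have head : ∑ k ∈ range n, ρ (cumSum x k) = ∑ k ∈ range n, ρ (cumSum y k) :=
    sum_congr rfl fun k hk => by rw [cumSum_eq_of_forall_lt_eq hxy (mem_range.1 hk)]
  have tail (t : SSeq) : |∑' k, ρ (cumSum t (k + n))| ≤ ∑' k, |ρ (n + k)| :=
    abs_tsum_comp_le_tsum_nat_add hρ
      ((cumSum_strictMono t).comp (strictMono_id.add_const n)).injective
      fun k => (Nat.le_add_left n k).trans ((cumSum_strictMono t).id_le _)
  rw [split x, split y, head, add_sub_add_left_eq_sub, two_mul]
  exact (abs_sub _ _).trans (add_le_add (tail x) (tail y))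

lemma varSet_nonempty (φ : SSeq → ℝ) (n : ℕ) : (varSet φ n).Nonempty :=
  ⟨_, 1, 1, fun _ _ => rfl, rfl⟩

lemma Vn_le {φ : SSeq → ℝ} {n : ℕ} {C : ℝ}
    (h : ∀ x y : SSeq, (∀ i < n, x i = y i) → |φ x - φ y| ≤ C) : Vn φ n ≤ C :=
  csSup_le (varSet_nonempty φ n) fun _ ⟨x, y, hxy, hd⟩ => hd ▸ h x y hxy

lemma Vn_nonneg (φ : SSeq → ℝ) (n : ℕ) : 0 ≤ Vn φ n :=
  Real.sSup_nonneg fun _ ⟨_, _, _, hd⟩ => hd ▸ abs_nonneg _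

lemma Vn_eq_mul_of_sub_eq {φ ψ : SSeq → ℝ} {a : ℝ} (ha : 0 ≤ a) {n : ℕ}
    (h : ∀ x y : SSeq, (∀ i < n, x i = y i) → φ x - φ y = a * (ψ x - ψ y)) :
    Vn φ n = a * Vn ψ n := by
  have hset : varSet φ n = a • varSet ψ n := by
    ext d
    simp only [varSet, Set.mem_smul_set, Set.mem_ofPred_eq, smul_eq_mul]
    constructor
    · rintro ⟨x, y, hxy, rfl⟩
      exact ⟨_, ⟨x, y, hxy, rfl⟩, by rw [h x y hxy, abs_mul, abs_of_nonneg ha]⟩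
    · rintro ⟨_, ⟨x, y, hxy, rfl⟩, rfl⟩
      exact ⟨x, y, hxy, by rw [h x y hxy, abs_mul, abs_of_nonneg ha]⟩
  rw [Vn, hset, Real.sSup_smul_of_nonneg ha, smul_eq_mul, Vn]

lemma Vn_mul_add_comp_head {ψ : SSeq → ℝ} {a : ℝ} (ha : 0 ≤ a) (f : ℕ+ → ℝ) {n : ℕ}
    (hn : 1 ≤ n) : Vn (fun t => a * ψ t + f (t 0)) n = a * Vn ψ n :=
  Vn_eq_mul_of_sub_eq ha fun x y hxy => by rw [hxy 0 hn]; ring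

lemma summable_tsum_nat_add_of_summable_mul {f : ℕ → ℝ} (hf : ∀ n, 0 ≤ f n)
    (h : Summable fun n : ℕ => ((n : ℝ) + 1) * f n) : Summable fun n => ∑' k, f (n + k) := by
  have hprod : Summable fun p : ℕ × ℕ => f (p.1 + p.2) := by
    rw [← HasAntidiagonal.sigmaAntidiagonalEquivProd.summable_iff]
    refine (summable_sigma_of_nonneg fun _ => hf _).2 ⟨fun _ => .of_finite, h.congr fun n => ?_⟩
    simp only [HasAntidiagonal.sigmaAntidiagonalEquivProd_apply]
    rw [tsum_congr fun p : antidiagonal n => congrArg f (mem_antidiagonal.1 p.2), tsum_const,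
      Nat.card_eq_fintype_card, Fintype.card_coe, Nat.card_antidiagonal, nsmul_eq_mul]
    push_cast
    ring
  exact ((summable_prod_of_nonneg fun _ => hf _).1 hprod).2

lemma tsum_le_of_le_geometric {f : ℕ → ℝ} {C r : ℝ} (hf0 : ∀ k, 0 ≤ f k)
    (hf : ∀ k, f k ≤ C * r ^ k) (hr0 : 0 ≤ r) (hr1 : r < 1) : ∑' k, f k ≤ C / (1 - r) := by
  have hgeom : Summable fun k => C * r ^ k := (summable_geometric_of_lt_one hr0 hr1).mul_left C
  calc ∑' k, f k ≤ ∑' k, C * r ^ k := (hgeom.of_nonneg_of_le hf0 hf).tsum_le_tsum hf hgeom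
    _ = C / (1 - r) := by rw [tsum_mul_left, tsum_geometric_of_lt_one hr0 hr1, div_eq_mul_inv]

theorem variations_of_potentials_general (K ρ : ℕ → ℝ)
    (hρ : Summable fun n : ℕ => |ρ (n + 1)|)
    (β : ℝ) :
    (∀ n : ℕ, 1 ≤ n → Vn (Gpot ρ) n ≤ 2 * ∑' k : ℕ, |ρ (n + k)|) ∧
      (∀ c F : ℝ, 0 ≤ F → ∀ n : ℕ, 1 ≤ n →
        Vn (phiBeta K ρ β) n = β ^ 2 * Vn (Gpot ρ) n ∧
          Vn (fun t => phiBeta K ρ β t - c - F * ((t 0 : ℕ) : ℝ)) n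
            = β ^ 2 * Vn (Gpot ρ) n) ∧
      ((Summable fun n : ℕ => ((n : ℝ) + 1) * |ρ (n + 1)|) →
        Summable fun n : ℕ => Vn (phiBeta K ρ β) (n + 1)) ∧
      (∀ C ϱ : ℝ, 0 < C → ϱ ∈ Set.Ioo (0 : ℝ) 1 →
        (∀ n : ℕ, 1 ≤ n → |ρ n| ≤ C * ϱ ^ n) →
        ∀ n : ℕ, 1 ≤ n → Vn (phiBeta K ρ β) n ≤ 2 * C * β ^ 2 / (1 - ϱ) * ϱ ^ n) := by
  have hG (n : ℕ) : Vn (Gpot ρ) n ≤ 2 * ∑' k, |ρ (n + k)| :=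
    Vn_le fun _ _ => abs_Gpot_sub_le ((summable_nat_add_iff 1).1 hρ)
  have hφ (n : ℕ) (hn : 1 ≤ n) : Vn (phiBeta K ρ β) n = β ^ 2 * Vn (Gpot ρ) n :=
    Vn_mul_add_comp_head (sq_nonneg β) (fun s => log (K s)) hn
  have hφG (n : ℕ) (hn : 1 ≤ n) : Vn (phiBeta K ρ β) n ≤ β ^ 2 * (2 * ∑' k, |ρ (n + k)|) :=
    hφ n hn ▸ mul_le_mul_of_nonneg_left (hG n) (sq_nonneg β)
  refine ⟨fun n _ => hG n, fun c F _ n hn => ⟨hφ n hn, ?_⟩, fun hsum => ?_,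
    fun C ϱ _ ⟨hϱ0, hϱ1⟩ hρC n hn => ?_⟩
  · have hshape : (fun t => phiBeta K ρ β t - c - F * ((t 0 : ℕ) : ℝ))
        = fun t => β ^ 2 * Gpot ρ t + (log (K (t 0)) - c - F * ((t 0 : ℕ) : ℝ)) := by
      funext t; simp only [phiBeta]; ring
    rw [hshape]
    exact Vn_mul_add_comp_head (sq_nonneg β) (fun s => log (K s) - c - F * ((s : ℕ) : ℝ)) hn
  · have htails := summable_tsum_nat_add_of_summable_mul (fun _ => abs_nonneg _) hsum
    refine .of_nonneg_of_le (fun n => Vn_nonneg _ _)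
      (fun n => (hφG (n + 1) le_add_self).trans_eq ?_) ((htails.mul_left 2).mul_left (β ^ 2))
    simp only [add_right_comm]
  · have htail : ∑' k, |ρ (n + k)| ≤ C * ϱ ^ n / (1 - ϱ) :=
      tsum_le_of_le_geometric (fun _ => abs_nonneg _)
        (fun k => (hρC (n + k) (by omega)).trans_eq (by ring)) hϱ0.le hϱ1
    calc Vn (phiBeta K ρ β) n ≤ β ^ 2 * (2 * (C * ϱ ^ n / (1 - ϱ))) :=
          (hφG n hn).trans (by gcongr)
      _ = 2 * C * β ^ 2 / (1 - ϱ) * ϱ ^ n := by ring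

/-- Variations of the potentials `G` and `φ_β` in terms of the decay of the correlations. -/
theorem variations_of_potentials (K ρ : ℕ → ℝ)
    (hKpos : ∀ n : ℕ, 1 ≤ n → 0 < K n)
    (hKsum : HasSum (fun n : ℕ => K (n + 1)) 1)
    (hρ : Summable fun n : ℕ => |ρ (n + 1)|)
    (β : ℝ) (hβ : 0 ≤ β) :
    (∀ n : ℕ, 1 ≤ n → Vn (Gpot ρ) n ≤ 2 * ∑' k : ℕ, |ρ (n + k)|) ∧
      (∀ c F : ℝ, 0 ≤ F → ∀ n : ℕ, 1 ≤ n →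
        Vn (phiBeta K ρ β) n = β ^ 2 * Vn (Gpot ρ) n ∧
          Vn (fun t => phiBeta K ρ β t - c - F * ((t 0 : ℕ) : ℝ)) n
            = β ^ 2 * Vn (Gpot ρ) n) ∧
      ((Summable fun n : ℕ => ((n : ℝ) + 1) * |ρ (n + 1)|) →
        Summable fun n : ℕ => Vn (phiBeta K ρ β) (n + 1)) ∧
      (∀ C ϱ : ℝ, 0 < C → ϱ ∈ Set.Ioo (0 : ℝ) 1 →
        (∀ n : ℕ, 1 ≤ n → |ρ n| ≤ C * ϱ ^ n) →
        ∀ n : ℕ, 1 ≤ n → Vn (phiBeta K ρ β) n ≤ 2 * C * β ^ 2 / (1 - ϱ) * ϱ ^ n) :=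
  variations_of_potentials_general K ρ hρ β
end
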